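/- The set of monomials z_3^h z_2^m z_1^n, where (h, m, n) ranges over all triples of integers for which it is not the case that h = m = n, is an F-basis of the Lie algebra L_q; equivalently, L_q equals the F-linear span of these monomials. -/

import Mathlib

/-!
Write `z^t = z₃^h z₂^m z₁^n` for `t = (h, m, n)`. The relations give `z^t z^s = q^σ(t,s) z^(t+s)`
for an explicit bilinear form `σ`, hence `[z^t, z^s] = (q^σ(t,s) - q^σ(s,t)) z^(t+s)`, and since
`q` is not a root of unity the coefficient vanishes exactly when `σ(t,s) = σ(s,t)`. This happens
whenever `t + s` lies on the diagonal, so the span of the off-diagonal monomials is closed under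
the bracket and therefore contains `L_q`. Conversely, from `t` one may add any multiple of a unit
vector `e` as long as `σ(t,e) ≠ σ(e,t)`, a condition that does not change along the way; starting
from the generators `z_i^{±1}`, a few such moves reach every off-diagonal exponent.
Linear independence is inherited from the monomial basis of `A_q`.
-/

attribute [local instance] LieRing.ofAssociativeRing

/-- `L_q`: the Lie subalgebra of `A_q` (under the commutator bracket `[U,V] = UV - VU`)
generated by `z₁, z₁⁻¹, z₂, z₂⁻¹, z₃, z₃⁻¹`. -/
def LqSub (F : Type*) [Field F] {A : Type*} [Ring A] [Algebra F A]
    (z1 z2 z3 : Aˣ) : LieSubalgebra F A :=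
  LieSubalgebra.lieSpan F A
    {(↑z1 : A), (↑z1⁻¹ : A), (↑z2 : A), (↑z2⁻¹ : A), (↑z3 : A), (↑z3⁻¹ : A)}

open Submodule in
theorem LieSubalgebra.coe_lieSpan_eq_span_of_forall_lie_mem_span {R L : Type*} [CommRing R]
    [LieRing L] [LieAlgebra R L] {s : Set L} (hs : ∀ x ∈ s, ∀ y ∈ s, ⁅x, y⁆ ∈ span R s) :
    (lieSpan R L s : Submodule R L) = span R s := by
  have hlie {x y : L} (hx : x ∈ span R s) (hy : y ∈ span R s) : ⁅x, y⁆ ∈ span R s := by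
    simpa using LinearMap.BilinMap.apply_apply_mem_of_mem_span _ s s
      (LieModule.toEnd R L L : L →ₗ[R] Module.End R L) (by simpa using hs) x y hx hy
  refine le_antisymm ?_ submodule_span_le_lieSpan
  change _ ≤ ({ span R s with lie_mem' := hlie } : LieSubalgebra R L)
  rw [lieSpan_le]
  exact subset_span

theorem Module.Basis.exists_basis_of_eq_span_image {ι R M : Type*} [Ring R] [AddCommGroup M]
    [Module R M] (b : Module.Basis ι R M) (s : Set ι) {W : Submodule R M}
    (hW : W = Submodule.span R (b '' s)) : ∃ c : Module.Basis s R W, ∀ i, (c i : M) = b i := by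
  have hli : LinearIndependent R (fun i : s => b i) :=
    b.linearIndependent.comp _ Subtype.val_injective
  have hspan : Submodule.span R (Set.range fun i : s => b i) = W := by
    rw [hW, Set.image_eq_range]
  exact ⟨(Module.Basis.span hli).map (LinearEquiv.ofEq _ _ hspan), fun i => by simp⟩

theorem zpow_sub_zpow_ne_zero {K : Type*} [DivisionRing K] {q : K} (hq₀ : q ≠ 0)
    (hq : ¬IsOfFinOrder q) {a b : ℤ} (hab : a ≠ b) : q ^ a - q ^ b ≠ 0 := by
  have hinj : Function.Injective fun n : ℤ => Units.mk0 q hq₀ ^ n :=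
    injective_zpow_iff_not_isOfFinOrder.mpr (by rwa [← Units.isOfFinOrder_val])
  refine sub_ne_zero.mpr fun h => hab (hinj (Units.ext ?_))
  simpa [Units.val_zpow_eq_zpow_val] using h

section QCommute

variable {G : Type*} [Group G] {c u v : G}

theorem mul_zpow_eq_of_mul_eq (hcv : Commute c v) (h : u * v = c * (v * u)) (b : ℤ) :
    u * v ^ b = c ^ b * (v ^ b * u) := by
  have hsemi : SemiconjBy u v (c * v) := by rw [SemiconjBy, h, mul_assoc]
  rw [← mul_assoc, ← hcv.mul_zpow]
  exact hsemi.zpow_right b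

theorem zpow_mul_zpow_eq_of_mul_eq (hcu : Commute c u) (hcv : Commute c v)
    (h : u * v = c * (v * u)) (a b : ℤ) : u ^ a * v ^ b = c ^ (a * b) * (v ^ b * u ^ a) := by
  have h' : v ^ b * u = (c ^ b)⁻¹ * (u * v ^ b) := by
    rw [mul_zpow_eq_of_mul_eq hcv h, inv_mul_cancel_left]
  rw [mul_zpow_eq_of_mul_eq (hcu.zpow_left b).inv_left h' a]
  group

end QCommute

theorem Units.zpow_mul_zpow_of_mul_eq_smul {F A : Type*} [Field F] [Ring A] [Algebra F A]
    {q : F} (hq : q ≠ 0) {u v : Aˣ} (h : (u * v : A) = q • (v * u : A)) (a b : ℤ) :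
    (↑(u ^ a) * ↑(v ^ b) : A) = q ^ (a * b) • (↑(v ^ b) * ↑(u ^ a) : A) := by
  let c : Aˣ := Units.map (algebraMap F A : F →* A) (Units.mk0 q hq)
  have hc (w : Aˣ) : Commute c w := Units.ext (by simpa [c] using Algebra.commutes q (w : A))
  have hval (k : ℤ) : (↑(c ^ k) : A) = algebraMap F A (q ^ k) := by
    simp [c, ← map_zpow, Units.val_zpow_eq_zpow_val]
  have huv : u * v = c * (v * u) := Units.ext (by simp [c, h, Algebra.smul_def])
  have := congrArg Units.val (zpow_mul_zpow_eq_of_mul_eq (hc u) (hc v) huv a b)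
  rwa [Units.val_mul, Units.val_mul, hval, ← Algebra.smul_def] at this

namespace QuantumTorus

def cocycle (t s : ℤ × ℤ × ℤ) : ℤ :=
  t.2.1 * s.1 + t.2.2 * s.2.1 - t.2.2 * s.1

def nonDiagonal : Set (ℤ × ℤ × ℤ) := {t | ¬(t.1 = t.2.1 ∧ t.2.1 = t.2.2)}

def signedUnitVectors : Set (ℤ × ℤ × ℤ) :=
  {(0, 0, 1), (0, 0, -1), (0, 1, 0), (0, -1, 0), (1, 0, 0), (-1, 0, 0)}

theorem cocycle_comm_of_add_notMem_nonDiagonal {t s : ℤ × ℤ × ℤ} (h : t + s ∉ nonDiagonal) :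
    cocycle t s = cocycle s t := by
  obtain ⟨a, b, c⟩ := t
  obtain ⟨a', b', c'⟩ := s
  simp only [nonDiagonal, Set.mem_ofPred_eq, not_not, Prod.mk_add_mk] at h
  obtain ⟨e1, e2⟩ := h
  simp only [cocycle]
  linear_combination (b - c) * e1 + (b - a) * e2

theorem add_zsmul_mem_of_closed {S : Set (ℤ × ℤ × ℤ)}
    (hS : ∀ t ∈ S, ∀ s ∈ S, cocycle t s ≠ cocycle s t → t + s ∈ S) {e t : ℤ × ℤ × ℤ}
    (he : e ∈ S) (he' : -e ∈ S) (ht : t ∈ S) (hte : cocycle t e ≠ cocycle e t) (k : ℤ) :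
    t + k • e ∈ S := by
  have hshift (k : ℤ) :
      cocycle (t + k • e) e - cocycle e (t + k • e) = cocycle t e - cocycle e t := by
    simp only [cocycle, Prod.fst_add, Prod.snd_add, Prod.smul_fst, Prod.smul_snd, smul_eq_mul]
    ring
  have hneg (x : ℤ × ℤ × ℤ) :
      cocycle x (-e) - cocycle (-e) x = -(cocycle x e - cocycle e x) := by
    simp only [cocycle, Prod.fst_neg, Prod.snd_neg]
    ring
  induction k using Int.induction_on with
  | zero => simpa using ht
  | succ k ih =>
    rw [add_smul, one_smul, ← add_assoc]
    exact hS _ ih _ he (by have := hshift k; omega)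
  | pred k ih =>
    rw [sub_smul, one_smul, sub_eq_add_neg, ← add_assoc]
    exact hS _ ih _ he' (by have := hshift (-k); have := hneg (t + (-k : ℤ) • e); omega)

theorem nonDiagonal_subset_of_closed {S : Set (ℤ × ℤ × ℤ)}
    (hS : ∀ t ∈ S, ∀ s ∈ S, cocycle t s ≠ cocycle s t → t + s ∈ S)
    (hgen : signedUnitVectors ⊆ S) : nonDiagonal ⊆ S := by
  have line (e : ℤ × ℤ × ℤ) (he : e ∈ signedUnitVectors) (he' : -e ∈ signedUnitVectors)
      (t : ℤ × ℤ × ℤ) (ht : t ∈ S) (hte : cocycle t e ≠ cocycle e t) (k : ℤ) :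
      t + k • e ∈ S :=
    add_zsmul_mem_of_closed hS (hgen he) (hgen he') ht hte k
  have moveH {h m n : ℤ} (ht : (h, m, n) ∈ S) (hmn : m ≠ n) (h' : ℤ) : (h', m, n) ∈ S := by
    simpa using line (1, 0, 0) (by simp [signedUnitVectors]) (by simp [signedUnitVectors]) _ ht
      (by simp [cocycle]; omega) (h' - h)
  have moveM {h m n : ℤ} (ht : (h, m, n) ∈ S) (hhn : h ≠ n) (m' : ℤ) : (h, m', n) ∈ S := by
    simpa using line (0, 1, 0) (by simp [signedUnitVectors]) (by simp [signedUnitVectors]) _ ht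
      (by simp [cocycle]; omega) (m' - m)
  have moveN {h m n : ℤ} (ht : (h, m, n) ∈ S) (hhm : h ≠ m) (n' : ℤ) : (h, m, n') ∈ S := by
    simpa using line (0, 0, 1) (by simp [signedUnitVectors]) (by simp [signedUnitVectors]) _ ht
      (by simp [cocycle]; omega) (n' - n)
  have slice (x y : ℤ) (hxy : x ≠ 0 ∨ y ≠ 0) : (x, y, 0) ∈ S := by
    have he2 : ((0, 1, 0) : ℤ × ℤ × ℤ) ∈ S := hgen (by simp [signedUnitVectors])
    have he3 : ((1, 0, 0) : ℤ × ℤ × ℤ) ∈ S := hgen (by simp [signedUnitVectors])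
    rcases hxy with hx | hy
    · exact moveM (moveH he2 one_ne_zero x) hx y
    · exact moveH (moveM he3 one_ne_zero y) hy x
  rintro ⟨h, m, n⟩ hnd
  simp only [nonDiagonal, Set.mem_ofPred_eq] at hnd
  by_cases hhm : h = m
  · subst hhm
    have hhn : h ≠ n := fun hhn => hnd ⟨rfl, hhn⟩
    exact moveH (moveN (slice (h + 1) h (by omega)) (by omega) n) hhn h
  · exact moveN (slice h m (by omega)) hhm n

section Monomials

variable {F : Type*} [Field F] {A : Type*} [Ring A] [Algebra F A]

structure Relations (q : F) (z1 z2 z3 : Aˣ) : Prop where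
  mul12 : (↑z1 * ↑z2 : A) = q • (↑z2 * ↑z1 : A)
  mul23 : (↑z2 * ↑z3 : A) = q • (↑z3 * ↑z2 : A)
  mul31 : (↑z3 * ↑z1 : A) = q • (↑z1 * ↑z3 : A)

def monomial (z1 z2 z3 : Aˣ) (t : ℤ × ℤ × ℤ) : A :=
  ↑(z3 ^ t.1 * z2 ^ t.2.1 * z1 ^ t.2.2)

variable {q : F} {z1 z2 z3 : Aˣ}

theorem monomial_mul (hz : Relations q z1 z2 z3) (hq : q ≠ 0) (t s : ℤ × ℤ × ℤ) :
    monomial z1 z2 z3 t * monomial z1 z2 z3 s =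
      q ^ cocycle t s • monomial z1 z2 z3 (t + s) := by
  obtain ⟨h, m, n⟩ := t
  obtain ⟨h', m', n'⟩ := s
  have swap {c : F} {x y : A} (hxy : x * y = c • (y * x)) (w : A) :
      x * (y * w) = c • (y * (x * w)) := by
    rw [← mul_assoc, hxy, smul_mul_assoc, mul_assoc]
  have merge (w : Aˣ) (a b : ℤ) (x : A) :
      (↑(w ^ a) : A) * ((↑(w ^ b) : A) * x) = ↑(w ^ (a + b)) * x := by
    rw [← mul_assoc, ← Units.val_mul, ← zpow_add]
  have h13 : (↑z1 * ↑z3 : A) = q⁻¹ • (↑z3 * ↑z1 : A) := by rw [hz.mul31, inv_smul_smul₀ hq]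
  have S13 := Units.zpow_mul_zpow_of_mul_eq_smul (inv_ne_zero hq) h13 n h'
  have S23 := Units.zpow_mul_zpow_of_mul_eq_smul hq hz.mul23 m h'
  have S12 := Units.zpow_mul_zpow_of_mul_eq_smul hq hz.mul12 n m'
  simp only [monomial, Prod.mk_add_mk, Units.val_mul, mul_assoc]
  simp only [swap S13, swap S23, swap S12, mul_smul_comm, smul_smul, merge]
  rw [← Units.val_mul (z1 ^ n), ← zpow_add]
  congr 1
  rw [inv_zpow', ← zpow_add₀ hq, ← zpow_add₀ hq, cocycle]
  ring_nf

theorem lie_monomial (hz : Relations q z1 z2 z3) (hq : q ≠ 0) (t s : ℤ × ℤ × ℤ) :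
    ⁅monomial z1 z2 z3 t, monomial z1 z2 z3 s⁆ =
      (q ^ cocycle t s - q ^ cocycle s t) • monomial z1 z2 z3 (t + s) := by
  rw [Ring.lie_def, monomial_mul hz hq, monomial_mul hz hq, add_comm s t, sub_smul]

theorem monomial_add_mem (hz : Relations q z1 z2 z3) (hq₀ : q ≠ 0) (hq : ¬IsOfFinOrder q)
    {L : LieSubalgebra F A} {t s : ℤ × ℤ × ℤ} (ht : monomial z1 z2 z3 t ∈ L)
    (hs : monomial z1 z2 z3 s ∈ L) (hts : cocycle t s ≠ cocycle s t) :
    monomial z1 z2 z3 (t + s) ∈ L := by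
  have hlie := L.lie_mem ht hs
  rw [lie_monomial hz hq₀] at hlie
  exact (L.smul_mem_iff (zpow_sub_zpow_ne_zero hq₀ hq hts)).mp hlie

theorem lqSub_eq_lieSpan_image (z1 z2 z3 : Aˣ) :
    LqSub F z1 z2 z3 = LieSubalgebra.lieSpan F A (monomial z1 z2 z3 '' signedUnitVectors) := by
  simp [LqSub, signedUnitVectors, Set.image_insert_eq, monomial]

theorem monomial_mem_lqSub (hz : Relations q z1 z2 z3) (hq₀ : q ≠ 0) (hq : ¬IsOfFinOrder q)
    {t : ℤ × ℤ × ℤ} (ht : t ∈ nonDiagonal) : monomial z1 z2 z3 t ∈ LqSub F z1 z2 z3 := by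
  refine nonDiagonal_subset_of_closed (S := monomial z1 z2 z3 ⁻¹' LqSub F z1 z2 z3)
    (fun t ht s hs hts => monomial_add_mem hz hq₀ hq ht hs hts) (fun e he => ?_) ht
  rw [Set.mem_preimage, lqSub_eq_lieSpan_image]
  exact LieSubalgebra.subset_lieSpan (Set.mem_image_of_mem _ he)

theorem lie_monomial_mem_span (hz : Relations q z1 z2 z3) (hq : q ≠ 0) (t s : ℤ × ℤ × ℤ) :
    ⁅monomial z1 z2 z3 t, monomial z1 z2 z3 s⁆ ∈
      Submodule.span F (monomial z1 z2 z3 '' nonDiagonal) := by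
  rw [lie_monomial hz hq]
  by_cases hts : t + s ∈ nonDiagonal
  · exact Submodule.smul_mem _ _ (Submodule.subset_span (Set.mem_image_of_mem _ hts))
  · rw [cocycle_comm_of_add_notMem_nonDiagonal hts, sub_self, zero_smul]
    exact zero_mem _

theorem lqSub_eq_span (hz : Relations q z1 z2 z3) (hq₀ : q ≠ 0) (hq : ¬IsOfFinOrder q) :
    (LqSub F z1 z2 z3).toSubmodule = Submodule.span F (monomial z1 z2 z3 '' nonDiagonal) := by
  refine le_antisymm ?_ (Submodule.span_le.mpr ?_)
  · have hgen : signedUnitVectors ⊆ nonDiagonal := by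
      simp [signedUnitVectors, nonDiagonal, Set.insert_subset_iff]
    calc (LqSub F z1 z2 z3).toSubmodule
        ≤ (LieSubalgebra.lieSpan F A (monomial z1 z2 z3 '' nonDiagonal)).toSubmodule := by
          rw [lqSub_eq_lieSpan_image]
          exact LieSubalgebra.lieSpan_mono (Set.image_mono hgen)
      _ = _ := LieSubalgebra.coe_lieSpan_eq_span_of_forall_lie_mem_span <| by
          rintro _ ⟨t, -, rfl⟩ _ ⟨s, -, rfl⟩
          exact lie_monomial_mem_span hz hq₀ t s
  · rintro _ ⟨t, ht, rfl⟩
    exact monomial_mem_lqSub hz hq₀ hq ht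

end Monomials

end QuantumTorus

/-- The monomials `z₃^h z₂^m z₁^n`, where `(h,m,n)` ranges over all
triples of integers for which it is not the case that `h = m = n`, form an `F`-basis
of `L_q`; equivalently, `L_q` equals the `F`-linear span of these monomials. -/
theorem basis_of_Lq
    {F : Type*} [Field F] {A : Type*} [Ring A] [Algebra F A]
    (q : F) (hq : q ≠ 0) (hqru : ∀ n : ℕ, 0 < n → q ^ n ≠ 1)
    (z1 z2 z3 : Aˣ)
    (h12 : (↑z1 * ↑z2 : A) = q • (↑z2 * ↑z1 : A))
    (h23 : (↑z2 * ↑z3 : A) = q • (↑z3 * ↑z2 : A))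
    (h31 : (↑z3 * ↑z1 : A) = q • (↑z1 * ↑z3 : A))
    (b : Module.Basis (ℤ × ℤ × ℤ) F A)
    (hb : ∀ t : ℤ × ℤ × ℤ, b t = (↑(z3 ^ t.1 * z2 ^ t.2.1 * z1 ^ t.2.2) : A)) :
    (∃ c : Module.Basis {t : ℤ × ℤ × ℤ // ¬ (t.1 = t.2.1 ∧ t.2.1 = t.2.2)} F
        (LqSub F z1 z2 z3).toSubmodule,
      ∀ t, (c t : A) = (↑(z3 ^ t.1.1 * z2 ^ t.1.2.1 * z1 ^ t.1.2.2) : A)) ∧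
    (LqSub F z1 z2 z3).toSubmodule =
      Submodule.span F {x : A | ∃ h m n : ℤ, ¬ (h = m ∧ m = n) ∧
        x = (↑(z3 ^ h * z2 ^ m * z1 ^ n) : A)} := by
  have hq' : ¬IsOfFinOrder q := by
    rw [isOfFinOrder_iff_pow_eq_one]
    rintro ⟨n, hn, hqn⟩
    exact hqru n hn hqn
  have hspan := QuantumTorus.lqSub_eq_span ⟨h12, h23, h31⟩ hq hq'
  have hbm : ⇑b = QuantumTorus.monomial z1 z2 z3 := funext hb
  refine ⟨?_, ?_⟩
  · obtain ⟨c, hc⟩ := b.exists_basis_of_eq_span_image QuantumTorus.nonDiagonal (hbm ▸ hspan)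
    exact ⟨c, fun t => (hc t).trans (hb t)⟩
  · rw [hspan]
    congr 1
    ext x
    simp [QuantumTorus.nonDiagonal, QuantumTorus.monomial, eq_comm]
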